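/- Let l, r ≥ 0 be integers with r + 1 ≤ l ≤ r + 2, let q ≥ 1 be an integer, and let λ₀, λ_∞ be as in the context; for R > 0 define λ_R(s) = λ₀(s) + R·λ_∞(s). Let p : ℂ → ℂ be a polynomial with p(0) = 1 and p'(0) = 1 (the stability polynomial of an explicit Runge–Kutta method of order at least 1). Then there exist positive numbers α₀, β₀, γ₀, depending only on l, r, q and p, such that for all h > 0, ν > 0 and δt > 0 satisfying δt < ν·γ₀ and (α₀ + ν·β₀/h)·(δt/h) < 1, setting μ = δt/h and R = ν/h, one has |p(μ·λ_R(e^{iθ}))| < 1 for all 0 < θ < 2π. (Hence the fully-discretized method is stable under this Courant-type condition.) -/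

import Mathlib

/-- Optimal finite-difference coefficients for the first derivative on the
stencil `{-l, …, r}`. -/
noncomputable def aCoef (l r : ℕ) (k : ℤ) : ℝ :=
  if k = 0 then
    -∑ ν ∈ (Finset.Icc (-(l : ℤ)) (r : ℤ)).erase 0, (1 : ℝ) / (ν : ℝ)
  else
    -((-1 : ℝ) ^ k / (k : ℝ)) *
      ((Nat.factorial l * Nat.factorial r : ℕ) : ℝ) /
      ((Nat.factorial ((l : ℤ) + k).toNat * Nat.factorial ((r : ℤ) - k).toNat : ℕ) : ℝ)

/-- The symbol `λ₀(s) = -Σ_{k=-l}^{r} a_k s^k` of the advection discretization. -/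
noncomputable def lam0 (l r : ℕ) (s : ℂ) : ℂ :=
  -∑ k ∈ Finset.Icc (-(l : ℤ)) (r : ℤ), (aCoef l r k : ℂ) * s ^ k

/-- Optimal centered finite-difference coefficients for the second derivative on
the stencil `{-q, …, q}`. -/
noncomputable def bCoef (q : ℕ) (k : ℤ) : ℝ :=
  if k = 0 then
    -∑ j ∈ Finset.Icc 1 q, 2 / (j : ℝ) ^ 2
  else
    -(2 * (-1 : ℝ) ^ k / (k : ℝ) ^ 2) *
      ((Nat.factorial q * Nat.factorial q : ℕ) : ℝ) /
      ((Nat.factorial ((q : ℤ) + k).toNat * Nat.factorial ((q : ℤ) - k).toNat : ℕ) : ℝ)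

/-- The symbol `λ_∞(s) = Σ_{k=-q}^{q} b_k s^k` of the diffusion discretization. -/
noncomputable def lamInf (q : ℕ) (s : ℂ) : ℂ :=
  ∑ k ∈ Finset.Icc (-(q : ℤ)) (q : ℤ), (bCoef q k : ℂ) * s ^ k

/-!
On the unit circle both symbols are explicit. Pairing `k` with `-k` and using
`r + 1 ≤ l ≤ r + 2`, one finds `a_k + a_{-k} = 2 E (-1)^k C(2l, l + k)` with
`E = lam0Dissipation l r ≥ 0`, so `λ₀(z) + λ₀(z⁻¹) = -2E ((1 - z)(1 - z⁻¹))^l` and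
`Re λ₀(z) = -E |1 - z|^{2l} ≤ 0`; moreover `λ₀(1) = 0`, so `|λ₀(z)| ≤ A |1 - z|`. Similarly, by
induction on `q`, `λ_∞(z) = -Σ_{m=1}^{q} γ_m |1 - z|^{2m}` with `γ_m = lamInfWeight m > 0` and
`γ_1 = 1`, so `λ_∞(z) = -b` with `|1 - z|² ≤ b ≤ B |1 - z|²`.

Writing `p(w) = 1 + w + w² g(w)` shows `|p(w)| < 1` whenever `|w| ≤ 1` and `K |w|² < -Re w`.
For `w = μ λ_R(z)` one has `-Re w ≥ μ R |1 - z|²`, while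
`K |w|² ≲ K μ² (A² + R² B²) |1 - z|²`; the two Courant-type conditions make the latter smaller.
-/

open Finset Nat

open Polynomial in
theorem Polynomial.exists_eval_eq_one_add_add_sq_mul {R : Type*} [CommRing R] (p : R[X])
    (hp0 : p.eval 0 = 1) (hp1 : p.derivative.eval 0 = 1) :
    ∃ g : R[X], ∀ w, p.eval w = 1 + w + w ^ 2 * g.eval w := by
  have hc1 : p.coeff 1 = 1 := by
    simpa [coeff_zero_eq_eval_zero, hp1] using (coeff_derivative p 0).symm
  have hdvd : (X : R[X]) ^ 2 ∣ p - 1 - X := by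
    rw [X_pow_dvd_iff]
    intro d hd
    interval_cases d <;> simp [coeff_zero_eq_eval_zero, hp0, hc1, coeff_one]
  obtain ⟨g, hg⟩ := hdvd
  refine ⟨g, fun w => ?_⟩
  have := congrArg (eval w) hg
  simp only [eval_sub, eval_mul, eval_pow, eval_X, eval_one] at this
  linear_combination this

open Polynomial in
theorem Polynomial.norm_eval_le_sum_norm_coeff {𝕜 : Type*} [NormedField 𝕜] (g : 𝕜[X]) {w : 𝕜}
    (hw : ‖w‖ ≤ 1) : ‖g.eval w‖ ≤ ∑ i ∈ range (g.natDegree + 1), ‖g.coeff i‖ := by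
  rw [eval_eq_sum_range]
  refine (norm_sum_le _ _).trans (sum_le_sum fun i _ => ?_)
  rw [norm_mul, norm_pow]
  exact mul_le_of_le_one_right (norm_nonneg _) (pow_le_one₀ (norm_nonneg _) hw)

theorem Complex.norm_one_add_le (w : ℂ) : ‖1 + w‖ ≤ 1 + w.re + ‖w‖ ^ 2 / 2 := by
  have hsq : ‖1 + w‖ ^ 2 = 1 + 2 * w.re + ‖w‖ ^ 2 := by
    simp only [← Complex.normSq_eq_norm_sq, Complex.normSq_apply, Complex.add_re,
      Complex.add_im, Complex.one_re, Complex.one_im]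
    ring
  -- AM-GM: `‖1 + w‖ ≤ (‖1 + w‖ ^ 2 + 1) / 2`
  nlinarith [sq_nonneg (‖1 + w‖ - 1)]

open Polynomial in
theorem exists_norm_eval_lt_one (p : ℂ[X]) (hp0 : p.eval 0 = 1) (hp1 : p.derivative.eval 0 = 1) :
    ∃ K > 0, ∀ w : ℂ, ‖w‖ ≤ 1 → K * ‖w‖ ^ 2 < -w.re → ‖p.eval w‖ < 1 := by
  obtain ⟨g, hg⟩ := p.exists_eval_eq_one_add_add_sq_mul hp0 hp1
  set M := ∑ i ∈ range (g.natDegree + 1), ‖g.coeff i‖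
  have hM : 0 ≤ M := sum_nonneg fun i _ => norm_nonneg _
  refine ⟨M + 1, by positivity, fun w hw hK => ?_⟩
  calc ‖p.eval w‖ ≤ ‖1 + w‖ + ‖w‖ ^ 2 * ‖g.eval w‖ := by
        rw [hg, ← norm_pow, ← norm_mul]; exact norm_add_le _ _
    _ ≤ (1 + w.re + ‖w‖ ^ 2 / 2) + ‖w‖ ^ 2 * M := by
        gcongr
        exacts [Complex.norm_one_add_le w, g.norm_eval_le_sum_norm_coeff hw]
    _ < 1 := by nlinarith [sq_nonneg ‖w‖]

theorem Complex.exp_ofReal_mul_I_ne_one {θ : ℝ} (h0 : 0 < θ) (h2 : θ < 2 * Real.pi) :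
    Complex.exp (θ * Complex.I) ≠ 1 := by
  intro h
  have := congrArg Complex.re h
  rw [Complex.exp_ofReal_mul_I_re, Complex.one_re,
    Real.cos_eq_one_iff_of_lt_of_lt (by linarith [Real.pi_pos]) h2] at this
  exact h0.ne' this

theorem norm_one_sub_le_two {z : ℂ} (hz : ‖z‖ = 1) : ‖1 - z‖ ≤ 2 :=
  (norm_sub_le _ _).trans (by rw [norm_one, hz]; norm_num)

theorem one_sub_mul_one_sub_inv_eq_norm_sq {z : ℂ} (hz : ‖z‖ = 1) :
    (1 - z) * (1 - z⁻¹) = ((‖1 - z‖ ^ 2 : ℝ) : ℂ) := by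
  rw [Complex.inv_eq_conj hz, ← Complex.normSq_eq_norm_sq, ← Complex.mul_conj, map_sub, map_one]

theorem sum_Icc_neg_one_zpow_mul_choose_mul_zpow (n : ℕ) {z : ℂ} (hz : z ≠ 0) :
    ∑ k ∈ Icc (-(n : ℤ)) n, (-1 : ℂ) ^ k * ((2 * n).choose (n + k).toNat : ℂ) * z ^ k
      = ((1 - z) * (1 - z⁻¹)) ^ n := by
  have hW : (1 - z) * (1 - z⁻¹) = -z⁻¹ * (1 - z) ^ 2 := by field_simp; ring
  rw [hW, mul_pow, ← pow_mul, sub_eq_neg_add, add_pow, mul_sum]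
  refine sum_nbij' (fun k => (n + k).toNat) (fun j => j - n) (by simp; omega) (by simp; omega)
    (by simp; omega) (by simp) fun k hk => ?_
  simp only [mem_Icc] at hk
  obtain ⟨j, rfl⟩ : ∃ j : ℕ, k = j - n := ⟨(n + k).toNat, by omega⟩
  have h1 : (-1 : ℂ) ≠ 0 := by norm_num
  rw [show ((n : ℤ) + (j - n)).toNat = j by omega, zpow_sub₀ hz, zpow_sub₀ h1]
  simp only [zpow_natCast, one_pow, mul_one, neg_pow z, neg_pow z⁻¹, inv_pow]
  field_simp
  rw [← pow_mul, pow_mul', neg_one_sq, one_pow, one_mul]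

theorem norm_zpow_sub_one_le {𝕜 : Type*} [NormedField 𝕜] {z : 𝕜} (hz : ‖z‖ = 1) (k : ℤ) :
    ‖z ^ k - 1‖ ≤ |(k : ℝ)| * ‖z - 1‖ := by
  have hz0 : z ≠ 0 := by rintro rfl; simp at hz
  induction k using Int.induction_on with
  | zero => simp
  | succ i ih =>
    have : z ^ ((i : ℤ) + 1) - 1 = z ^ (i : ℤ) * (z - 1) + (z ^ (i : ℤ) - 1) := by
      rw [zpow_add_one₀ hz0]; ring
    rw [this]
    grw [norm_add_le, norm_mul, norm_zpow, hz, one_zpow, ih]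
    push_cast
    rw [abs_of_nonneg (by positivity), abs_of_nonneg (by positivity)]
    linarith
  | pred i ih =>
    have : z ^ (-(i : ℤ) - 1) - 1 = z ^ (-(i : ℤ) - 1) * (1 - z) + (z ^ (-(i : ℤ)) - 1) := by
      rw [zpow_sub_one₀ hz0]; field_simp; ring
    rw [this]
    grw [norm_add_le, norm_mul, norm_zpow, hz, one_zpow, norm_sub_rev, ih]
    push_cast
    rw [abs_neg, ← neg_add', abs_neg, abs_of_nonneg (by positivity), abs_of_nonneg (by positivity)]
    linarith

theorem norm_sum_mul_zpow_le {𝕜 : Type*} [NormedField 𝕜] (s : Finset ℤ) (c : ℤ → 𝕜)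
    (hc : ∑ k ∈ s, c k = 0) {z : 𝕜} (hz : ‖z‖ = 1) :
    ‖∑ k ∈ s, c k * z ^ k‖ ≤ (∑ k ∈ s, ‖c k‖ * |(k : ℝ)|) * ‖z - 1‖ := by
  have : ∑ k ∈ s, c k * z ^ k = ∑ k ∈ s, c k * (z ^ k - 1) := by
    simp only [mul_sub, mul_one, sum_sub_distrib, hc, sub_zero]
  rw [this, sum_mul]
  refine (norm_sum_le _ _).trans (sum_le_sum fun k _ => ?_)
  rw [norm_mul, mul_assoc]
  exact mul_le_mul_of_nonneg_left (norm_zpow_sub_one_le hz k) (norm_nonneg _)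

theorem aCoef_natCast (l r : ℕ) {m : ℕ} (hm : m ≠ 0) :
    aCoef l r m = -((-1) ^ m / m) * (l ! * r ! : ℝ) / ((l + m)! * (r - m)!) := by
  rw [aCoef, if_neg (by exact_mod_cast hm)]
  push_cast
  rw [show ((l : ℤ) + m).toNat = l + m by omega, show ((r : ℤ) - m).toNat = r - m by omega,
    zpow_natCast]

theorem aCoef_neg_natCast (l r : ℕ) {m : ℕ} (hm : m ≠ 0) :
    aCoef l r (-m) = (-1) ^ m / m * (l ! * r ! : ℝ) / ((l - m)! * (r + m)!) := by
  rw [aCoef, if_neg (by omega)]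
  push_cast
  rw [show ((l : ℤ) + -m).toNat = l - m by omega, show ((r : ℤ) - -m).toNat = r + m by omega,
    zpow_neg, zpow_natCast, ← inv_pow, inv_neg, inv_one]
  ring

theorem sum_Icc_one_div_eq_neg_sum_Ioc (l r : ℕ) (hrl : r ≤ l) :
    ∑ ν ∈ Icc (-(l : ℤ)) r, (1 : ℝ) / ν = -∑ ν ∈ Ioc (r : ℤ) l, (1 : ℝ) / ν := by
  have hsymm : ∑ ν ∈ Icc (-(l : ℤ)) l, (1 : ℝ) / ν = 0 :=
    sum_involution (fun ν _ => -ν) (fun ν _ => by push_cast; ring)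
      (fun ν _ hν => by contrapose! hν; simp [show ν = 0 by omega])
      (fun ν hν => by simp only [mem_Icc] at hν ⊢; omega) (fun ν _ => neg_neg ν)
  have hsplit : Icc (-(l : ℤ)) l = Icc (-(l : ℤ)) r ∪ Ioc (r : ℤ) l := by
    ext ν; simp only [mem_Icc, mem_union, mem_Ioc]; omega
  rw [hsplit, sum_union (disjoint_left.2 fun ν h h' => by
    simp only [mem_Icc, mem_Ioc] at h h'; omega)] at hsymm
  linarith

theorem aCoef_zero (l r : ℕ) (hrl : r ≤ l) : aCoef l r 0 = ∑ ν ∈ Ioc (r : ℤ) l, (1 : ℝ) / ν := by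
  rw [aCoef, if_pos rfl, sum_erase _ (by simp), sum_Icc_one_div_eq_neg_sum_Ioc l r hrl, neg_neg]

noncomputable def aExt (l r : ℕ) (k : ℤ) : ℝ := if k ≤ r then aCoef l r k else 0

noncomputable def lam0Dissipation (l r : ℕ) : ℝ :=
  ((if l = r + 1 then 1 else 2 * l - 1 : ℕ) * l ! * r ! : ℝ) / (2 * l)!

theorem aExt_add_aExt_neg_of_le (l r : ℕ) (h1 : r + 1 ≤ l) (h2 : l ≤ r + 2) {m : ℕ}
    (hm0 : m ≠ 0) (hmr : m ≤ r) :
    aExt l r m + aExt l r (-m) = 2 * lam0Dissipation l r * (-1) ^ m * (2 * l).choose (l + m) := by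
  rw [aExt, aExt, if_pos (by omega), if_pos (by omega), aCoef_natCast l r hm0,
    aCoef_neg_natCast l r hm0, Nat.cast_choose ℝ (by omega), lam0Dissipation]
  obtain ⟨j, rfl⟩ : ∃ j, r = m + j := ⟨r - m, by omega⟩
  have hm : (m : ℝ) ≠ 0 := by exact_mod_cast hm0
  obtain rfl | rfl : l = m + j + 1 ∨ l = m + j + 2 := by omega
  · rw [if_pos rfl, show m + j + 1 + m = 2 * m + j + 1 by omega,
      show 2 * (m + j + 1) - (2 * m + j + 1) = j + 1 by omega,
      show m + j + 1 - m = j + 1 by omega, show m + j - m = j by omega,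
      show m + j + m = 2 * m + j by omega]
    simp only [Nat.factorial_succ]
    push_cast
    field_simp
    ring
  · rw [if_neg (by omega), show m + j + 2 + m = 2 * m + j + 1 + 1 by omega,
      show 2 * (m + j + 2) - (2 * m + j + 1 + 1) = j + 1 + 1 by omega,
      show m + j + 2 - m = j + 1 + 1 by omega, show m + j - m = j by omega,
      show m + j + m = 2 * m + j by omega, show 2 * (m + j + 2) - 1 = 2 * m + 2 * j + 3 by omega]
    simp only [Nat.factorial_succ]
    push_cast
    field_simp
    ring

theorem aExt_add_aExt_neg_of_lt (l r : ℕ) (h2 : l ≤ r + 2) {m : ℕ} (hrm : r < m) (hml : m ≤ l) :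
    aExt l r m + aExt l r (-m) = 2 * lam0Dissipation l r * (-1) ^ m * (2 * l).choose (l + m) := by
  rw [aExt, aExt, if_neg (by omega), if_pos (by omega), zero_add, aCoef_neg_natCast l r (by omega),
    Nat.cast_choose ℝ (by omega), lam0Dissipation]
  have hm : (m : ℝ) ≠ 0 := by exact_mod_cast (show m ≠ 0 by omega)
  obtain ⟨rfl, rfl⟩ | ⟨rfl, rfl⟩ | ⟨rfl, rfl⟩ :
      (l = r + 1 ∧ m = r + 1) ∨ (l = r + 2 ∧ m = r + 1) ∨ (l = r + 2 ∧ m = r + 2) := by omega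
  · rw [if_pos rfl, show r + 1 + (r + 1) = 2 * r + 1 + 1 by omega,
      show 2 * (r + 1) = 2 * r + 1 + 1 by omega, Nat.sub_self, Nat.sub_self,
      show r + (r + 1) = 2 * r + 1 by omega]
    simp only [Nat.factorial_succ]
    push_cast
    field_simp
    ring
  · rw [if_neg (by omega), show r + 2 + (r + 1) = 2 * r + 1 + 1 + 1 by omega,
      show 2 * (r + 2) = 2 * r + 1 + 1 + 1 + 1 by omega, show r + 2 - (r + 1) = 1 by omega,
      show r + (r + 1) = 2 * r + 1 by omega, show 2 * r + 1 + 1 + 1 + 1 - 1 = 2 * r + 3 by omega,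
      show 2 * r + 1 + 1 + 1 + 1 - (2 * r + 1 + 1 + 1) = 1 by omega]
    simp only [Nat.factorial_succ]
    push_cast
    field_simp
    ring
  · rw [if_neg (by omega), show r + 2 + (r + 2) = 2 * r + 1 + 1 + 1 + 1 by omega,
      show 2 * (r + 2) = 2 * r + 1 + 1 + 1 + 1 by omega, Nat.sub_self, Nat.sub_self,
      show r + (r + 2) = 2 * r + 1 + 1 by omega,
      show 2 * r + 1 + 1 + 1 + 1 - 1 = 2 * r + 3 by omega]
    simp only [Nat.factorial_succ]
    push_cast
    field_simp
    ring

theorem aCoef_zero_eq_mul_choose (l r : ℕ) (h1 : r + 1 ≤ l) (h2 : l ≤ r + 2) :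
    aCoef l r 0 = lam0Dissipation l r * (2 * l).choose l := by
  rw [aCoef_zero l r (by omega), Nat.cast_choose ℝ (by omega), lam0Dissipation]
  obtain rfl | rfl : l = r + 1 ∨ l = r + 2 := by omega
  · rw [if_pos rfl, show Ioc (r : ℤ) ↑(r + 1) = {(r : ℤ) + 1} by ext; simp; omega,
      show 2 * (r + 1) - (r + 1) = r + 1 by omega, sum_singleton]
    simp only [Nat.factorial_succ]
    push_cast
    field_simp
  · rw [if_neg (by omega),
      show Ioc (r : ℤ) ↑(r + 2) = {(r : ℤ) + 1, (r : ℤ) + 2} by ext; simp; omega,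
      show 2 * (r + 2) - (r + 2) = r + 1 + 1 by omega, show 2 * (r + 2) - 1 = 2 * r + 3 by omega,
      sum_pair (by omega), show r + 2 = r + 1 + 1 by omega]
    simp only [Nat.factorial_succ]
    push_cast
    field_simp
    ring

theorem aExt_add_aExt_neg_natCast (l r : ℕ) (h1 : r + 1 ≤ l) (h2 : l ≤ r + 2) {m : ℕ}
    (hml : m ≤ l) :
    aExt l r m + aExt l r (-m) = 2 * lam0Dissipation l r * (-1) ^ m * (2 * l).choose (l + m) := by
  rcases Nat.eq_zero_or_pos m with rfl | hm0
  · rw [Nat.cast_zero, neg_zero, ← two_mul, aExt, if_pos (by omega),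
      aCoef_zero_eq_mul_choose l r h1 h2, add_zero, pow_zero, mul_one, mul_assoc]
  rcases le_or_gt m r with hmr | hrm
  · exact aExt_add_aExt_neg_of_le l r h1 h2 hm0.ne' hmr
  · exact aExt_add_aExt_neg_of_lt l r h2 hrm hml

theorem aExt_add_aExt_neg (l r : ℕ) (h1 : r + 1 ≤ l) (h2 : l ≤ r + 2) {k : ℤ}
    (hk : k ∈ Icc (-(l : ℤ)) l) :
    aExt l r k + aExt l r (-k)
      = 2 * lam0Dissipation l r * (-1) ^ k * (2 * l).choose (l + k).toNat := by
  rw [mem_Icc] at hk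
  obtain ⟨m, rfl | rfl⟩ := Int.eq_nat_or_neg k
  · rw [show ((l : ℤ) + m).toNat = l + m by omega, zpow_natCast]
    exact aExt_add_aExt_neg_natCast l r h1 h2 (by omega)
  · rw [show ((l : ℤ) + -m).toNat = 2 * l - (l + m) by omega, Nat.choose_symm (by omega),
      zpow_neg, zpow_natCast, ← inv_pow, inv_neg, inv_one, neg_neg, add_comm]
    exact aExt_add_aExt_neg_natCast l r h1 h2 (by omega)

theorem lam0_eq_neg_sum_aExt (l r : ℕ) (hrl : r ≤ l) (z : ℂ) :
    lam0 l r z = -∑ k ∈ Icc (-(l : ℤ)) l, (aExt l r k : ℂ) * z ^ k := by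
  rw [lam0, neg_inj]
  calc ∑ k ∈ Icc (-(l : ℤ)) r, (aCoef l r k : ℂ) * z ^ k
      = ∑ k ∈ Icc (-(l : ℤ)) r, (aExt l r k : ℂ) * z ^ k :=
        sum_congr rfl fun k hk => by rw [aExt, if_pos (mem_Icc.mp hk).2]
    _ = _ := sum_subset (Icc_subset_Icc_right (by exact_mod_cast hrl)) fun k hk hk' => by
        rw [aExt, if_neg (by simp only [mem_Icc] at hk hk'; omega), Complex.ofReal_zero, zero_mul]

theorem lam0_add_lam0_inv (l r : ℕ) (h1 : r + 1 ≤ l) (h2 : l ≤ r + 2) {z : ℂ} (hz : z ≠ 0) :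
    lam0 l r z + lam0 l r z⁻¹ = -(2 * lam0Dissipation l r) * ((1 - z) * (1 - z⁻¹)) ^ l := by
  have hreflect : ∑ k ∈ Icc (-(l : ℤ)) l, (aExt l r k : ℂ) * z⁻¹ ^ k
      = ∑ k ∈ Icc (-(l : ℤ)) l, (aExt l r (-k) : ℂ) * z ^ k :=
    sum_nbij' Neg.neg Neg.neg (by simp; omega) (by simp; omega) (by simp) (by simp)
      fun k _ => by rw [neg_neg, inv_zpow']
  rw [lam0_eq_neg_sum_aExt l r (by omega), lam0_eq_neg_sum_aExt l r (by omega), hreflect,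
    ← neg_add, ← sum_add_distrib, ← sum_Icc_neg_one_zpow_mul_choose_mul_zpow l hz, mul_sum,
    ← sum_neg_distrib]
  refine sum_congr rfl fun k hk => ?_
  rw [← add_mul, ← Complex.ofReal_add, aExt_add_aExt_neg l r h1 h2 hk]
  push_cast
  ring

theorem lam0_conj (l r : ℕ) (z : ℂ) : lam0 l r (starRingEnd ℂ z) = starRingEnd ℂ (lam0 l r z) := by
  simp only [lam0, map_neg, map_sum, map_mul, map_zpow₀, Complex.conj_ofReal]

theorem lam0Dissipation_nonneg (l r : ℕ) : 0 ≤ lam0Dissipation l r := by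
  unfold lam0Dissipation; positivity

theorem re_lam0 (l r : ℕ) (h1 : r + 1 ≤ l) (h2 : l ≤ r + 2) {z : ℂ} (hz : ‖z‖ = 1) :
    (lam0 l r z).re = -lam0Dissipation l r * ‖1 - z‖ ^ (2 * l) := by
  have hz0 : z ≠ 0 := by rintro rfl; simp at hz
  have h := lam0_add_lam0_inv l r h1 h2 hz0
  rw [Complex.inv_eq_conj hz, lam0_conj, Complex.add_conj, ← Complex.inv_eq_conj hz,
    one_sub_mul_one_sub_inv_eq_norm_sq hz] at h
  have h' : 2 * (lam0 l r z).re = -(2 * lam0Dissipation l r) * (‖1 - z‖ ^ 2) ^ l := by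
    exact_mod_cast h
  rw [pow_mul]
  linarith

theorem re_lam0_nonpos (l r : ℕ) (h1 : r + 1 ≤ l) (h2 : l ≤ r + 2) {z : ℂ} (hz : ‖z‖ = 1) :
    (lam0 l r z).re ≤ 0 := by
  rw [re_lam0 l r h1 h2 hz]
  have := lam0Dissipation_nonneg l r
  have : 0 ≤ ‖1 - z‖ ^ (2 * l) := by positivity
  nlinarith

theorem lam0_one (l r : ℕ) (h1 : r + 1 ≤ l) (h2 : l ≤ r + 2) : lam0 l r 1 = 0 := by
  have h := lam0_add_lam0_inv l r h1 h2 one_ne_zero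
  rw [inv_one, sub_self, zero_mul, zero_pow (by omega), mul_zero, ← two_mul] at h
  exact (mul_eq_zero.mp h).resolve_left two_ne_zero

theorem exists_norm_lam0_le (l r : ℕ) (h1 : r + 1 ≤ l) (h2 : l ≤ r + 2) :
    ∃ A > 0, ∀ z : ℂ, ‖z‖ = 1 → ‖lam0 l r z‖ ≤ A * ‖1 - z‖ := by
  set A := ∑ k ∈ Icc (-(l : ℤ)) r, ‖(aCoef l r k : ℂ)‖ * |(k : ℝ)|
  have hA : 0 ≤ A := sum_nonneg fun k _ => by positivity
  refine ⟨A + 1, by positivity, fun z hz => ?_⟩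
  have hsum : ∑ k ∈ Icc (-(l : ℤ)) r, (aCoef l r k : ℂ) = 0 := by
    simpa [lam0] using lam0_one l r h1 h2
  rw [lam0, norm_neg, norm_sub_rev]
  grw [norm_sum_mul_zpow_le _ _ hsum hz]
  gcongr
  linarith

noncomputable def lamInfWeight (m : ℕ) : ℝ := 2 * ((m - 1)! : ℝ) ^ 2 / (2 * m)!

theorem bCoef_natCast (q : ℕ) {m : ℕ} (hm : m ≠ 0) :
    bCoef q m = -(2 * (-1) ^ m / m ^ 2) * (q ! * q ! : ℝ) / ((q + m)! * (q - m)!) := by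
  rw [bCoef, if_neg (by exact_mod_cast hm)]
  push_cast
  rw [show ((q : ℤ) + m).toNat = q + m by omega, show ((q : ℤ) - m).toNat = q - m by omega,
    zpow_natCast]

theorem bCoef_neg (q : ℕ) (k : ℤ) : bCoef q (-k) = bCoef q k := by
  rcases eq_or_ne k 0 with rfl | hk
  · rw [neg_zero]
  rw [bCoef, bCoef, if_neg (neg_ne_zero.mpr hk), if_neg hk, zpow_neg, ← inv_zpow, inv_neg, inv_one,
    Int.cast_neg, neg_sq, sub_neg_eq_add, ← sub_eq_add_neg, mul_comm (((q : ℤ) + k).toNat)!]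

theorem bCoef_succ_zero_sub (q : ℕ) :
    bCoef (q + 1) 0 - bCoef q 0 = -lamInfWeight (q + 1) * (2 * (q + 1)).choose (q + 1) := by
  rw [bCoef, bCoef, if_pos rfl, if_pos rfl, sum_Icc_succ_top (by omega),
    Nat.cast_choose ℝ (by omega), lamInfWeight, show 2 * (q + 1) - (q + 1) = q + 1 by omega,
    Nat.add_sub_cancel]
  simp only [Nat.factorial_succ]
  push_cast
  field_simp
  ring

theorem bCoef_succ_natCast_sub {q m : ℕ} (hm0 : m ≠ 0) (hmq : m ≤ q) :
    bCoef (q + 1) m - bCoef q m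
      = -lamInfWeight (q + 1) * (-1) ^ m * (2 * (q + 1)).choose (q + 1 + m) := by
  rw [bCoef_natCast _ hm0, bCoef_natCast _ hm0, Nat.cast_choose ℝ (by omega), lamInfWeight,
    Nat.add_sub_cancel]
  obtain ⟨j, rfl⟩ : ∃ j, q = m + j := ⟨q - m, by omega⟩
  have hm : (m : ℝ) ≠ 0 := by exact_mod_cast hm0
  rw [show m + j + 1 + m = 2 * m + j + 1 by omega, show m + j + 1 - m = j + 1 by omega,
    show 2 * (m + j + 1) - (2 * m + j + 1) = j + 1 by omega, show m + j - m = j by omega,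
    show m + j + m = 2 * m + j by omega]
  simp only [Nat.factorial_succ]
  push_cast
  field_simp
  ring

theorem bCoef_succ_self (q : ℕ) :
    bCoef (q + 1) (q + 1 : ℕ)
      = -lamInfWeight (q + 1) * (-1) ^ (q + 1) * (2 * (q + 1)).choose (q + 1 + (q + 1)) := by
  rw [bCoef_natCast _ (by omega), lamInfWeight, Nat.add_sub_cancel, Nat.sub_self,
    show q + 1 + (q + 1) = 2 * (q + 1) by omega, Nat.choose_self]
  simp only [Nat.factorial_succ, Nat.factorial_zero]
  push_cast
  field_simp

theorem bCoef_succ_natCast_sub_ite {q m : ℕ} (hm : m ≤ q + 1) :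
    bCoef (q + 1) m - (if (m : ℤ) ∈ Icc (-(q : ℤ)) q then bCoef q m else 0)
      = -lamInfWeight (q + 1) * (-1) ^ m * (2 * (q + 1)).choose (q + 1 + m) := by
  rcases Nat.lt_or_eq_of_le hm with hmq | rfl
  · rw [if_pos (by simp only [mem_Icc]; omega)]
    rcases eq_or_ne m 0 with rfl | hm0
    · simpa using bCoef_succ_zero_sub q
    · exact bCoef_succ_natCast_sub hm0 (by omega)
  · rw [if_neg (by simp only [mem_Icc]; omega), sub_zero, bCoef_succ_self]

theorem bCoef_succ_sub_ite (q : ℕ) {k : ℤ} (hk : k ∈ Icc (-((q + 1 : ℕ) : ℤ)) (q + 1 : ℕ)) :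
    bCoef (q + 1) k - (if k ∈ Icc (-(q : ℤ)) q then bCoef q k else 0)
      = -lamInfWeight (q + 1) * (-1) ^ k * (2 * (q + 1)).choose ((q + 1 : ℕ) + k).toNat := by
  rw [mem_Icc] at hk
  obtain ⟨m, rfl | rfl⟩ := Int.eq_nat_or_neg k
  · rw [show (((q + 1 : ℕ) : ℤ) + m).toNat = q + 1 + m by omega, zpow_natCast]
    exact bCoef_succ_natCast_sub_ite (by omega)
  · rw [show (((q + 1 : ℕ) : ℤ) + -m).toNat = 2 * (q + 1) - (q + 1 + m) by omega,
      Nat.choose_symm (by omega), zpow_neg, zpow_natCast, ← inv_pow, inv_neg, inv_one,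
      bCoef_neg, bCoef_neg]
    have hmem : -(m : ℤ) ∈ Icc (-(q : ℤ)) q ↔ (m : ℤ) ∈ Icc (-(q : ℤ)) q := by
      simp only [mem_Icc]; omega
    simp only [hmem]
    exact bCoef_succ_natCast_sub_ite (by omega)

theorem lamInf_succ (q : ℕ) {z : ℂ} (hz : z ≠ 0) :
    lamInf (q + 1) z = lamInf q z - lamInfWeight (q + 1) * ((1 - z) * (1 - z⁻¹)) ^ (q + 1) := by
  have hext : lamInf q z = ∑ k ∈ Icc (-((q + 1 : ℕ) : ℤ)) (q + 1 : ℕ),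
      ((if k ∈ Icc (-(q : ℤ)) q then bCoef q k else 0 : ℝ) : ℂ) * z ^ k := by
    refine (sum_congr rfl fun k hk => by rw [if_pos hk]).trans
      (sum_subset (Icc_subset_Icc (by omega) (by omega)) fun k _ hk => ?_)
    rw [if_neg hk, Complex.ofReal_zero, zero_mul]
  rw [hext, lamInf, ← sum_Icc_neg_one_zpow_mul_choose_mul_zpow (q + 1) hz, mul_sum,
    eq_sub_iff_add_eq, ← sum_add_distrib]
  refine sum_congr rfl fun k hk => ?_
  have h := congrArg (fun x : ℝ => (x : ℂ)) (bCoef_succ_sub_ite q hk)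
  push_cast at h ⊢
  linear_combination z ^ k * h

theorem lamInf_eq_neg_sum (q : ℕ) {z : ℂ} (hz : z ≠ 0) :
    lamInf q z = -∑ m ∈ Icc 1 q, (lamInfWeight m : ℂ) * ((1 - z) * (1 - z⁻¹)) ^ m := by
  induction q with
  | zero => simp [lamInf, bCoef]
  | succ q ih => rw [lamInf_succ q hz, ih, sum_Icc_succ_top (by omega)]; ring

theorem lamInfWeight_pos (m : ℕ) : 0 < lamInfWeight m := by
  unfold lamInfWeight; positivity

theorem exists_lamInf_bounds (q : ℕ) (hq : 1 ≤ q) :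
    ∃ B > 0, ∀ z : ℂ, ‖z‖ = 1 →
      ∃ b : ℝ, lamInf q z = -b ∧ ‖1 - z‖ ^ 2 ≤ b ∧ b ≤ B * ‖1 - z‖ ^ 2 := by
  have h1q : 1 ∈ Icc 1 q := mem_Icc.mpr ⟨le_rfl, hq⟩
  refine ⟨∑ m ∈ Icc 1 q, lamInfWeight m * 4 ^ (m - 1),
    sum_pos (fun m _ => by have := lamInfWeight_pos m; positivity) ⟨1, h1q⟩, fun z hz => ?_⟩
  have hz0 : z ≠ 0 := by rintro rfl; simp at hz
  set s := ‖1 - z‖ ^ 2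
  have hs0 : 0 ≤ s := by positivity
  have hs4 : s ≤ 4 := by have := norm_one_sub_le_two hz; nlinarith [norm_nonneg (1 - z)]
  have hterm : ∀ m ∈ Icc 1 q, 0 ≤ lamInfWeight m * s ^ m := fun m _ =>
    mul_nonneg (lamInfWeight_pos m).le (pow_nonneg hs0 m)
  refine ⟨∑ m ∈ Icc 1 q, lamInfWeight m * s ^ m, ?_, ?_, ?_⟩
  · rw [lamInf_eq_neg_sum q hz0, one_sub_mul_one_sub_inv_eq_norm_sq hz]
    simp [s]
  · calc s = lamInfWeight 1 * s ^ 1 := by simp [lamInfWeight]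
      _ ≤ _ := single_le_sum hterm h1q
  · rw [sum_mul]
    refine sum_le_sum fun m hm => ?_
    have hm1 : m = m - 1 + 1 := by simp only [mem_Icc] at hm; omega
    calc lamInfWeight m * s ^ m = lamInfWeight m * (s ^ (m - 1) * s) := by
          rw [← pow_succ, ← hm1]
      _ ≤ lamInfWeight m * (4 ^ (m - 1) * s) := by
          gcongr; exact (lamInfWeight_pos m).le
      _ = _ := by ring

theorem mul_sq_lt_of_le_add {n t μ R A B K : ℝ} (hn0 : 0 ≤ n)
    (hn : n ≤ μ * (A * t) + μ * R * (B * t ^ 2)) (ht0 : 0 < t) (ht2 : t ≤ 2) (hμ : 0 < μ)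
    (hR : 0 < R) (hA : 0 ≤ A) (hB : 0 ≤ B) (hK : 0 ≤ K) (hγ : 4 * K * A ^ 2 * μ < R)
    (hβ : 16 * K * B ^ 2 * (μ * R) < 1) :
    K * n ^ 2 < μ * R * t ^ 2 := by
  have hX : K * (2 * (μ * (A * t)) ^ 2) < μ * R * t ^ 2 / 2 := by
    have : 0 < μ * t ^ 2 := by positivity
    calc K * (2 * (μ * (A * t)) ^ 2) = μ * t ^ 2 * (2 * K * A ^ 2 * μ) := by ring
      _ < μ * t ^ 2 * (R / 2) := by gcongr; linarith
      _ = _ := by ring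
  have hY : K * (2 * (μ * R * (B * t ^ 2)) ^ 2) ≤ μ * R * t ^ 2 / 2 := by
    have ht4 : t ^ 2 ≤ 4 := by nlinarith
    calc K * (2 * (μ * R * (B * t ^ 2)) ^ 2)
        = μ * R * t ^ 2 * (2 * K * B ^ 2 * (μ * R) * t ^ 2) := by ring
      _ ≤ μ * R * t ^ 2 * (2 * K * B ^ 2 * (μ * R) * 4) := by gcongr
      _ ≤ μ * R * t ^ 2 * (1 / 2) := by gcongr; linarith
      _ = _ := by ring
  have hn2 : n ^ 2 ≤ 2 * (μ * (A * t)) ^ 2 + 2 * (μ * R * (B * t ^ 2)) ^ 2 := by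
    have : 0 ≤ μ * (A * t) + μ * R * (B * t ^ 2) := by positivity
    nlinarith [sq_nonneg (μ * (A * t) - μ * R * (B * t ^ 2))]
  nlinarith [mul_le_mul_of_nonneg_left hn2 hK]

theorem norm_le_one_and_mul_sq_lt_neg_re {a : ℂ} {b t μ R A B K : ℝ}
    (ha_re : a.re ≤ 0) (ha : ‖a‖ ≤ A * t) (hb_lo : t ^ 2 ≤ b) (hb_hi : b ≤ B * t ^ 2)
    (ht0 : 0 < t) (ht2 : t ≤ 2) (hμ : 0 < μ) (hR : 0 < R) (hK : 0 ≤ K)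
    (hγ : 4 * K * A ^ 2 * μ < R) (hαβ : 4 * A * μ + (16 * K * B ^ 2 + 8 * B) * (μ * R) < 1) :
    ‖(μ : ℂ) * (a + R * -b)‖ ≤ 1 ∧
      K * ‖(μ : ℂ) * (a + R * -b)‖ ^ 2 < -((μ : ℂ) * (a + R * -b)).re := by
  have hb0 : 0 ≤ b := (sq_nonneg t).trans hb_lo
  have hA : 0 ≤ A := nonneg_of_mul_nonneg_left ((norm_nonneg a).trans ha) ht0
  have hB : 0 ≤ B := nonneg_of_mul_nonneg_left (hb0.trans hb_hi) (by positivity)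
  have hμR : 0 < μ * R := mul_pos hμ hR
  have hnorm : ‖(μ : ℂ) * (a + R * -b)‖ ≤ μ * (A * t) + μ * R * (B * t ^ 2) := by
    calc ‖(μ : ℂ) * (a + R * -b)‖ ≤ μ * (A * t + R * (B * t ^ 2)) := by
          rw [norm_mul, Complex.norm_of_nonneg hμ.le]
          grw [norm_add_le, norm_mul, norm_neg, Complex.norm_of_nonneg hR.le,
            Complex.norm_of_nonneg hb0, ha, hb_hi]
      _ = _ := by ring
  have hre : μ * R * t ^ 2 ≤ -((μ : ℂ) * (a + R * -b)).re := by
    simp only [Complex.re_ofReal_mul, Complex.add_re, Complex.neg_re, Complex.ofReal_re]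
    nlinarith [mul_le_mul_of_nonneg_left hb_lo hμR.le, mul_nonpos_of_nonneg_of_nonpos hμ.le ha_re]
  refine ⟨hnorm.trans ?_, (mul_sq_lt_of_le_add (norm_nonneg _) hnorm ht0 ht2 hμ hR hA hB hK hγ
    (by nlinarith [mul_nonneg hA hμ.le, mul_nonneg hB hμR.le])).trans_le hre⟩
  have h1 : μ * (A * t) ≤ μ * (A * 2) := by gcongr
  have h2 : μ * R * (B * t ^ 2) ≤ μ * R * (B * 4) := by gcongr; nlinarith
  nlinarith [mul_nonneg (mul_nonneg hK (sq_nonneg B)) hμR.le]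

/-- Conditional stability of the fully-discretized ADE method: for any stable
spatial discretization and any at-least-first-order explicit Runge–Kutta
stability polynomial `p` (`p(0) = 1`, `p'(0) = 1`), there are `α₀, β₀, γ₀ > 0`
such that whenever `δt < ν·γ₀` and `(α₀ + ν·β₀/h)·(δt/h) < 1`, all nonzero
eigenvalues `p(μ·λ_R(e^{iθ}))` (with `μ = δt/h`, `R = ν/h`) have modulus `< 1`. -/
theorem fully_discrete_ADE_conditionally_stable (l r : ℕ)
    (h1 : r + 1 ≤ l) (h2 : l ≤ r + 2) (q : ℕ) (hq : 1 ≤ q)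
    (p : Polynomial ℂ) (hp0 : p.eval 0 = 1) (hp1 : p.derivative.eval 0 = 1) :
    ∃ α₀ > (0 : ℝ), ∃ β₀ > (0 : ℝ), ∃ γ₀ > (0 : ℝ),
      ∀ h ν δt : ℝ, 0 < h → 0 < ν → 0 < δt →
        δt < ν * γ₀ → (α₀ + ν * β₀ / h) * (δt / h) < 1 →
        ∀ θ : ℝ, 0 < θ → θ < 2 * Real.pi →
          ‖p.eval (((δt / h : ℝ) : ℂ) *
            (lam0 l r (Complex.exp (θ * Complex.I)) +
              ((ν / h : ℝ) : ℂ) * lamInf q (Complex.exp (θ * Complex.I))))‖ < 1 := by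
  obtain ⟨K, hK, hp⟩ := exists_norm_eval_lt_one p hp0 hp1
  obtain ⟨A, hA, hlam0⟩ := exists_norm_lam0_le l r h1 h2
  obtain ⟨B, hB, hlamInf⟩ := exists_lamInf_bounds q hq
  refine ⟨4 * A, by positivity, 16 * K * B ^ 2 + 8 * B, by positivity, 1 / (4 * K * A ^ 2),
    by positivity, fun h ν δt hh hν hδt hγ hαβ θ hθ0 hθ2 => ?_⟩
  set z := Complex.exp (θ * Complex.I)
  have hz : ‖z‖ = 1 := Complex.norm_exp_ofReal_mul_I θ
  have ht : 0 < ‖1 - z‖ :=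
    norm_pos_iff.mpr (sub_ne_zero.mpr (Complex.exp_ofReal_mul_I_ne_one hθ0 hθ2).symm)
  obtain ⟨b, hb, hb_lo, hb_hi⟩ := hlamInf z hz
  have hγ' : 4 * K * A ^ 2 * (δt / h) < ν / h := by
    rw [← mul_div_assoc, div_lt_div_iff_of_pos_right hh]
    calc 4 * K * A ^ 2 * δt < 4 * K * A ^ 2 * (ν * (1 / (4 * K * A ^ 2))) := by gcongr
      _ = ν := by field_simp
  have hαβ' : 4 * A * (δt / h) + (16 * K * B ^ 2 + 8 * B) * (δt / h * (ν / h)) < 1 := by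
    convert hαβ using 1
    field_simp
  rw [hb]
  exact (norm_le_one_and_mul_sq_lt_neg_re (re_lam0_nonpos l r h1 h2 hz) (hlam0 z hz) hb_lo hb_hi
    ht (norm_one_sub_le_two hz) (div_pos hδt hh) (div_pos hν hh) hK.le hγ' hαβ').elim (hp _)
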